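/- (Corollary 1: hard-threshold exponential weight.) Fix α ∈ (0,1), define the weight w(u) = e^{−u}·1{e^{−u} > α} and, for μ ∈ ℝ^p and symmetric positive definite V, the central region B(μ,V) = { x ∈ ℝ^p : d(x,μ,V) < ln(1/α) }. Let f(x) = det(V0)^{−1/2} ψ(d(x,μ0,V0)) be an elliptical density on ℝ^p. Then for every a > 0, taking (μ,V) = (μ0, aV0), the truncated estimating equations hold: ∫_{B(μ,V)} e^{−d(x,μ,V)} (x−μ) f(x) dx = 0 and ∫_{B(μ,V)} e^{−d(x,μ,V)} ( (x−μ)(x−μ)ᵀ − (d(x,μ,V)/p)·V ) f(x) dx = 0. -/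

import Mathlib

/-!
Whitening `x = μ + S z` with `S Sᵀ = V` turns `d(x, μ, V)` into `‖z‖²`, so an integrand that
depends on `x` only through `d = d(x, μ, V)` becomes orthogonally invariant in `z`. Invariance
under the point reflection about `μ` kills the first moment. In the whitened coordinates,
coordinate reflections kill the off-diagonal second moments and coordinate swaps equalise the
diagonal ones, which therefore all equal `1/p` of the trace moment; undoing the whitening gives
`∫ h(d) (x - μ)(x - μ)ᵀ = (∫ h(d) d / p) V`. For `V = a V₀` the density is again a function of
`d(x, μ₀, V)` and so is the hard-threshold weight `e^{-d} 1{d < ln(1/α)}`, while `d e^{-d} ≤ e⁻¹`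
keeps everything integrable.
-/

open MeasureTheory Matrix Finset

/-- Mahalanobis-type squared distance `d(x, μ, V) = (x−μ)ᵀ V⁻¹ (x−μ)`. -/
noncomputable def mahal {p : ℕ} (x μ : EuclideanSpace ℝ (Fin p))
    (V : Matrix (Fin p) (Fin p) ℝ) : ℝ :=
  ∑ i, ∑ j, (x i - μ i) * V⁻¹ i j * (x j - μ j)

/-- The central region `B(μ,V) = {x : d(x,μ,V) < ln(1/α)}`. -/
noncomputable def centralRegion {p : ℕ} (α : ℝ) (μ : EuclideanSpace ℝ (Fin p))
    (V : Matrix (Fin p) (Fin p) ℝ) : Set (EuclideanSpace ℝ (Fin p)) :=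
  {x | mahal x μ V < Real.log (1 / α)}

open WithLp (ofLp)

section AffineChangeOfVariables

variable {E F : Type*} [NormedAddCommGroup E] [NormedSpace ℝ E] [MeasurableSpace E]
  [BorelSpace E] [FiniteDimensional ℝ E] (μ : Measure E) [μ.IsAddHaarMeasure]
  [NormedAddCommGroup F] {L : E →ₗ[ℝ] E}

theorem measurePreserving_add_linearMap (hL : LinearMap.det L ≠ 0) (c : E) :
    MeasurePreserving (fun z => c + L z) μ (ENNReal.ofReal |(LinearMap.det L)⁻¹| • μ) :=
  (measurePreserving_add_left _ c).comp
    ⟨L.continuous_of_finiteDimensional.measurable,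
      Measure.map_linearMap_addHaar_eq_smul_addHaar μ hL⟩

theorem measurableEmbedding_add_linearMap (hL : LinearMap.det L ≠ 0) (c : E) :
    MeasurableEmbedding fun z => c + L z :=
  ((L.equivOfDetNeZero hL).toContinuousLinearEquiv.toHomeomorph.trans
    (Homeomorph.addLeft c)).measurableEmbedding

theorem integral_comp_add_linearMap [NormedSpace ℝ F] (hL : LinearMap.det L ≠ 0) (c : E)
    (g : E → F) : ∫ z, g (c + L z) ∂μ = |(LinearMap.det L)⁻¹| • ∫ x, g x ∂μ := by
  rw [(measurePreserving_add_linearMap μ hL c).integral_comp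
    (measurableEmbedding_add_linearMap hL c), integral_smul_measure,
    ENNReal.toReal_ofReal (abs_nonneg _)]

theorem integrable_comp_add_linearMap_iff (hL : LinearMap.det L ≠ 0) (c : E) {g : E → F} :
    Integrable (fun z => g (c + L z)) μ ↔ Integrable g μ := by
  rw [← Function.comp_def, (measurePreserving_add_linearMap μ hL c).integrable_comp_emb
    (measurableEmbedding_add_linearMap hL c), integrable_smul_measure] <;> simp [hL]

end AffineChangeOfVariables

theorem integral_eq_zero_of_linearIsometryEquiv_eq_neg {E F : Type*} [NormedAddCommGroup E]
    [InnerProductSpace ℝ E] [FiniteDimensional ℝ E] [MeasurableSpace E] [BorelSpace E]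
    [NormedAddCommGroup F] [NormedSpace ℝ F] (e : E ≃ₗᵢ[ℝ] E) {f : E → F}
    (hf : ∀ x, f (e x) = -f x) : ∫ x, f x = 0 := by
  have : IsAddTorsionFree F := .of_isTorsionFree ℝ F
  rw [← self_eq_neg, ← integral_neg, ← MeasureTheory.integral_comp e]
  simp only [hf]

theorem mulVec_apply_mul_mulVec_apply {ι : Type*} [Fintype ι] (S : Matrix ι ι ℝ) (v : ι → ℝ)
    (i j : ι) : (S *ᵥ v) i * (S *ᵥ v) j = ∑ k, ∑ l, S i k * S j l * (v k * v l) := by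
  simp only [mulVec, dotProduct]
  rw [sum_mul_sum]
  exact sum_congr rfl fun k _ => sum_congr rfl fun l _ => by ring

section OrthogonallyInvariant

variable {ι : Type*} [Fintype ι] {G : EuclideanSpace ℝ ι → ℝ}

theorem integrable_mul_coord_mul_coord (hGm : AEStronglyMeasurable G)
    (hGint : Integrable fun z => G z * ‖z‖ ^ 2) (k l : ι) :
    Integrable fun z => G z * (z k * z l) := by
  refine hGint.mono (hGm.mul (by fun_prop)) (ae_of_all _ fun z => ?_)
  simp only [norm_mul, norm_norm, sq]
  gcongr <;> exact PiLp.norm_apply_le z _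

theorem integrable_mul_mulVec_mul_mulVec (hGm : AEStronglyMeasurable G)
    (hGint : Integrable fun z => G z * ‖z‖ ^ 2) (S : Matrix ι ι ℝ) (i j : ι) :
    Integrable fun z => G z * ((S *ᵥ ofLp z) i * (S *ᵥ ofLp z) j) := by
  simp_rw [mulVec_apply_mul_mulVec_apply, mul_sum]
  exact integrable_finsetSum _ fun k _ => integrable_finsetSum _ fun l _ =>
    ((integrable_mul_coord_mul_coord hGm hGint k l).const_mul (S i k * S j l)).congr
      (ae_of_all _ fun z => by ring)

variable [DecidableEq ι]

theorem integral_mul_coord_mul_coord_of_ne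
    (hG : ∀ (e : EuclideanSpace ℝ ι ≃ₗᵢ[ℝ] EuclideanSpace ℝ ι) z, G (e z) = G z)
    {k l : ι} (hkl : k ≠ l) : ∫ z, G z * (z k * z l) = 0 := by
  let e : EuclideanSpace ℝ ι ≃ₗᵢ[ℝ] EuclideanSpace ℝ ι := LinearIsometryEquiv.piLpCongrRight 2
    fun i => if i = k then LinearIsometryEquiv.neg ℝ else LinearIsometryEquiv.refl ℝ ℝ
  refine integral_eq_zero_of_linearIsometryEquiv_eq_neg e fun z => ?_
  rw [hG]
  simp [e, LinearIsometryEquiv.piLpCongrRight_apply, hkl.symm]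

theorem integral_mul_coord_mul_self_eq
    (hG : ∀ (e : EuclideanSpace ℝ ι ≃ₗᵢ[ℝ] EuclideanSpace ℝ ι) z, G (e z) = G z) (k l : ι) :
    ∫ z, G z * (z k * z k) = ∫ z, G z * (z l * z l) := by
  have h := MeasureTheory.integral_comp (LinearIsometryEquiv.piLpCongrLeft 2 ℝ ℝ (Equiv.swap k l))
    fun z => G z * (z l * z l)
  simpa [hG, LinearIsometryEquiv.piLpCongrLeft_apply] using h

theorem integral_mul_coord_mul_coord
    (hG : ∀ (e : EuclideanSpace ℝ ι ≃ₗᵢ[ℝ] EuclideanSpace ℝ ι) z, G (e z) = G z)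
    (hGm : AEStronglyMeasurable G) (hGint : Integrable fun z => G z * ‖z‖ ^ 2) (k l : ι) :
    ∫ z, G z * (z k * z l) =
      (∫ z, G z * ‖z‖ ^ 2) / Fintype.card ι * (1 : Matrix ι ι ℝ) k l := by
  rcases eq_or_ne k l with rfl | hkl
  · have htrace : ∫ z, G z * ‖z‖ ^ 2 = ∑ m, ∫ z, G z * (z m * z m) := by
      rw [← integral_finsetSum _ fun m _ => integrable_mul_coord_mul_coord hGm hGint m m]
      congr with z
      rw [EuclideanSpace.real_norm_sq_eq, mul_sum]
      simp [sq]
    have hcard : (Fintype.card ι : ℝ) ≠ 0 :=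
      Nat.cast_ne_zero.mpr (Fintype.card_pos_iff.mpr ⟨k⟩).ne'
    simp only [htrace, integral_mul_coord_mul_self_eq hG _ k, sum_const, card_univ, one_apply_eq,
      nsmul_eq_mul]
    field_simp
  · simp [integral_mul_coord_mul_coord_of_ne hG hkl, one_apply_ne hkl]

theorem integral_mul_mulVec_mul_mulVec
    (hG : ∀ (e : EuclideanSpace ℝ ι ≃ₗᵢ[ℝ] EuclideanSpace ℝ ι) z, G (e z) = G z)
    (hGm : AEStronglyMeasurable G) (hGint : Integrable fun z => G z * ‖z‖ ^ 2)
    (S : Matrix ι ι ℝ) (i j : ι) :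
    ∫ z, G z * ((S *ᵥ ofLp z) i * (S *ᵥ ofLp z) j) =
      (∫ z, G z * ‖z‖ ^ 2) / Fintype.card ι * (S * Sᵀ) i j := by
  have hexpand : ∀ z : EuclideanSpace ℝ ι, G z * ((S *ᵥ ofLp z) i * (S *ᵥ ofLp z) j) =
      ∑ k, ∑ l, S i k * S j l * (G z * (z k * z l)) := fun z => by
    simp only [mulVec_apply_mul_mulVec_apply, mul_sum]
    exact sum_congr rfl fun k _ => sum_congr rfl fun l _ => by ring
  have hint := fun k l => (integrable_mul_coord_mul_coord hGm hGint k l).const_mul (S i k * S j l)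
  simp_rw [hexpand]
  rw [integral_finsetSum _ fun k _ => integrable_finsetSum _ fun l _ => hint k l]
  simp_rw [integral_finsetSum _ fun l _ => hint _ l, integral_const_mul,
    integral_mul_coord_mul_coord hG hGm hGint, one_apply, mul_apply, transpose_apply, mul_sum]
  simp [mul_comm]

end OrthogonallyInvariant

open scoped MatrixOrder in
theorem Matrix.PosDef.exists_mul_transpose_eq {n : Type*} [Fintype n] [DecidableEq n]
    {V : Matrix n n ℝ} (hV : V.PosDef) : ∃ S : Matrix n n ℝ, S.det ≠ 0 ∧ S * Sᵀ = V := by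
  obtain ⟨B, hB⟩ := CStarAlgebra.nonneg_iff_eq_star_mul_self.mp hV.posSemidef.nonneg
  have hV' : V = Bᵀ * B := by simpa [star_eq_conjTranspose] using hB
  refine ⟨Bᵀ, fun h => hV.det_pos.ne' ?_, by rw [transpose_transpose, hV']⟩
  rw [hV', det_mul, h, zero_mul]

section Mahalanobis

variable {p : ℕ} {μ : EuclideanSpace ℝ (Fin p)} {V : Matrix (Fin p) (Fin p) ℝ}

theorem mahal_eq_dotProduct (x : EuclideanSpace ℝ (Fin p)) :
    mahal x μ V = ofLp (x - μ) ⬝ᵥ V⁻¹ *ᵥ ofLp (x - μ) := by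
  simp [mahal, dotProduct, mulVec, Finset.mul_sum, mul_assoc]

theorem mahal_add_neg (y : EuclideanSpace ℝ (Fin p)) : mahal (μ + -y) μ V = mahal (μ + y) μ V := by
  simp [mahal_eq_dotProduct, mulVec_neg]

theorem mahal_smul (hV : IsUnit V.det) {a : ℝ} (ha : a ≠ 0) (x : EuclideanSpace ℝ (Fin p)) :
    mahal x μ (a • V) = a⁻¹ * mahal x μ V := by
  have hinv : (a • V)⁻¹ = a⁻¹ • V⁻¹ := by
    simpa [Units.smul_def] using inv_smul' V (Units.mk0 a ha) hV
  simp [mahal_eq_dotProduct, hinv, smul_mulVec]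

theorem mahal_nonneg (hV : V.PosDef) (x : EuclideanSpace ℝ (Fin p)) : 0 ≤ mahal x μ V := by
  simpa [mahal_eq_dotProduct] using hV.inv.posSemidef.dotProduct_mulVec_nonneg (ofLp (x - μ))

theorem continuous_mahal : Continuous fun x => mahal x μ V := by
  unfold mahal
  fun_prop

theorem mahal_add_toLpLin {S : Matrix (Fin p) (Fin p) ℝ} (hS : S.det ≠ 0) (hSV : S * Sᵀ = V)
    (z : EuclideanSpace ℝ (Fin p)) : mahal (μ + toLpLin 2 2 S z) μ V = ‖z‖ ^ 2 := by
  have hS' : IsUnit S.det := isUnit_iff_ne_zero.mpr hS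
  rw [mahal_eq_dotProduct, add_sub_cancel_left, ofLp_toLpLin, toLin'_apply, ← hSV,
    Matrix.mul_inv_rev, ← mulVec_mulVec, mulVec_mulVec _ S⁻¹, nonsing_inv_mul _ hS', one_mulVec,
    dotProduct_mulVec, ← mulVec_transpose, transpose_nonsing_inv, transpose_transpose,
    mulVec_mulVec, nonsing_inv_mul _ hS', one_mulVec]
  rw [EuclideanSpace.real_norm_sq_eq]
  simp [dotProduct, sq]

theorem add_toLpLin_apply_sub (S : Matrix (Fin p) (Fin p) ℝ) (z : EuclideanSpace ℝ (Fin p))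
    (i : Fin p) : (μ + toLpLin 2 2 S z) i - μ i = (S *ᵥ ofLp z) i := by
  simp [toLpLin_apply]

end Mahalanobis

theorem integral_comp_mahal_smul_sub {p : ℕ} (H : ℝ → ℝ) (μ : EuclideanSpace ℝ (Fin p))
    (V : Matrix (Fin p) (Fin p) ℝ) : ∫ x, H (mahal x μ V) • (x - μ) = 0 := by
  rw [← integral_add_left_eq_self _ μ]
  refine integral_eq_zero_of_linearIsometryEquiv_eq_neg (.neg ℝ) fun y => ?_
  simp [mahal_add_neg]

section EllipticalMoments

variable {p : ℕ} {μ : EuclideanSpace ℝ (Fin p)} {V : Matrix (Fin p) (Fin p) ℝ} {H : ℝ → ℝ}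

theorem integrable_comp_norm_sq_mul_norm_sq {S : Matrix (Fin p) (Fin p) ℝ} (hS : S.det ≠ 0)
    (hSV : S * Sᵀ = V) (hint : Integrable fun x => H (mahal x μ V) * mahal x μ V) :
    Integrable fun z : EuclideanSpace ℝ (Fin p) => H (‖z‖ ^ 2) * ‖z‖ ^ 2 := by
  have h := (integrable_comp_add_linearMap_iff volume (L := toLpLin 2 2 S) (by simpa using hS)
    μ).mpr hint
  simpa only [mahal_add_toLpLin hS hSV] using h

theorem integrable_comp_mahal_mul_sub_mul_sub (hV : V.PosDef) (hH : Measurable H)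
    (hint : Integrable fun x => H (mahal x μ V) * mahal x μ V) (i j : Fin p) :
    Integrable fun x => H (mahal x μ V) * ((x i - μ i) * (x j - μ j)) := by
  obtain ⟨S, hS, hSV⟩ := hV.exists_mul_transpose_eq
  rw [← integrable_comp_add_linearMap_iff volume (L := toLpLin 2 2 S) (by simpa using hS) μ]
  simp only [mahal_add_toLpLin hS hSV, add_toLpLin_apply_sub]
  exact integrable_mul_mulVec_mul_mulVec (hH.comp (by fun_prop)).aestronglyMeasurable
    (integrable_comp_norm_sq_mul_norm_sq hS hSV hint) S i j

theorem integral_comp_mahal_mul_sub_mul_sub (hV : V.PosDef) (hH : Measurable H)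
    (hint : Integrable fun x => H (mahal x μ V) * mahal x μ V) (i j : Fin p) :
    ∫ x, H (mahal x μ V) * ((x i - μ i) * (x j - μ j)) =
      (∫ x, H (mahal x μ V) * mahal x μ V) / p * V i j := by
  obtain ⟨S, hS, hSV⟩ := hV.exists_mul_transpose_eq
  have hL : LinearMap.det (toLpLin 2 2 S) ≠ 0 := by simpa using hS
  have hmoment := integral_comp_add_linearMap volume hL μ
    fun x => H (mahal x μ V) * ((x i - μ i) * (x j - μ j))
  have htrace := integral_comp_add_linearMap volume hL μ fun x => H (mahal x μ V) * mahal x μ V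
  simp only [mahal_add_toLpLin hS hSV, add_toLpLin_apply_sub] at hmoment htrace
  rw [integral_mul_mulVec_mul_mulVec (G := fun z => H (‖z‖ ^ 2)) (fun e z => by rw [e.norm_map])
    (hH.comp (by fun_prop)).aestronglyMeasurable (integrable_comp_norm_sq_mul_norm_sq hS hSV hint),
    htrace, hSV, Fintype.card_fin, smul_eq_mul, smul_eq_mul] at hmoment
  have hr : |(LinearMap.det (toLpLin 2 2 S))⁻¹| ≠ 0 := by simpa using hS
  apply mul_left_cancel₀ hr
  linear_combination -hmoment

theorem integral_weight_mul_scatter_residual_mul_eq_zero (hV : V.PosDef) {w φ : ℝ → ℝ}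
    (hw : Measurable w) (hφ : Measurable φ) {C : ℝ} (hwC : ∀ u, 0 ≤ u → ‖w u * u‖ ≤ C)
    (hφint : Integrable fun x => φ (mahal x μ V)) (i j : Fin p) :
    ∫ x, w (mahal x μ V) * ((x i - μ i) * (x j - μ j) - mahal x μ V / p * V i j) *
      φ (mahal x μ V) = 0 := by
  set H := fun u => w u * φ u
  have hH : Measurable H := hw.mul hφ
  have hint : Integrable fun x => H (mahal x μ V) * mahal x μ V := by
    refine (hφint.norm.const_mul C).mono' ((hH.comp continuous_mahal.measurable).mul
      continuous_mahal.measurable).aestronglyMeasurable (ae_of_all _ fun x => ?_)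
    calc ‖H (mahal x μ V) * mahal x μ V‖
        = ‖w (mahal x μ V) * mahal x μ V‖ * ‖φ (mahal x μ V)‖ := by simp only [H, norm_mul]; ring
      _ ≤ C * ‖φ (mahal x μ V)‖ := by gcongr; exact hwC _ (mahal_nonneg hV x)
  have hsplit : ∀ x : EuclideanSpace ℝ (Fin p),
      w (mahal x μ V) * ((x i - μ i) * (x j - μ j) - mahal x μ V / p * V i j) * φ (mahal x μ V) =
        H (mahal x μ V) * ((x i - μ i) * (x j - μ j)) -
          H (mahal x μ V) * mahal x μ V * (V i j / p) := fun x => by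
    simp only [H]
    ring
  simp_rw [hsplit]
  rw [integral_sub (integrable_comp_mahal_mul_sub_mul_sub hV hH hint i j) (hint.mul_const _),
    integral_mul_const, integral_comp_mahal_mul_sub_mul_sub hV hH hint i j]
  ring

end EllipticalMoments

/-- For `α > 0` this is the paper's weight `w(u) = e^{-u} 1{e^{-u} > α}`. -/
noncomputable def hardThresholdWeight (α u : ℝ) : ℝ :=
  (Set.Iio (Real.log (1 / α))).indicator (fun v => Real.exp (-v)) u

theorem measurable_hardThresholdWeight (α : ℝ) : Measurable (hardThresholdWeight α) :=
  (Real.measurable_exp.comp measurable_neg).indicator measurableSet_Iio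

theorem norm_hardThresholdWeight_mul_le (α : ℝ) {u : ℝ} (hu : 0 ≤ u) :
    ‖hardThresholdWeight α u * u‖ ≤ Real.exp (-1) := by
  by_cases hL : u ∈ Set.Iio (Real.log (1 / α))
  · rw [hardThresholdWeight, Set.indicator_of_mem hL, Real.norm_of_nonneg (by positivity), mul_comm]
    exact Real.mul_exp_neg_le_exp_neg_one u
  · rw [hardThresholdWeight, Set.indicator_of_notMem hL, zero_mul, norm_zero]
    positivity

theorem indicator_centralRegion_exp_neg {p : ℕ} (α : ℝ) (μ : EuclideanSpace ℝ (Fin p))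
    (V : Matrix (Fin p) (Fin p) ℝ) (x : EuclideanSpace ℝ (Fin p)) :
    (centralRegion α μ V).indicator (fun x => Real.exp (-mahal x μ V)) x =
      hardThresholdWeight α (mahal x μ V) :=
  Set.indicator_comp_right (s := Set.Iio (Real.log (1 / α))) (g := fun v => Real.exp (-v)) _

theorem hard_threshold_truncated_estimating_equations_general
    {p : ℕ}
    (α : ℝ)
    (μ0 : EuclideanSpace ℝ (Fin p)) (V0 : Matrix (Fin p) (Fin p) ℝ)
    (hV0 : V0.PosDef)
    (ψ : ℝ → ℝ) (hψmeas : Measurable ψ)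
    (f : EuclideanSpace ℝ (Fin p) → ℝ)
    (hf : ∀ x, f x = (Real.sqrt V0.det)⁻¹ * ψ (mahal x μ0 V0))
    (hf1 : ∫ x, f x = 1)
    (a : ℝ) (ha : 0 < a) :
    (∫ x in centralRegion α μ0 (a • V0),
        (Real.exp (-(mahal x μ0 (a • V0))) * f x) • (x - μ0) = 0) ∧
    (∀ i j : Fin p,
      ∫ x in centralRegion α μ0 (a • V0),
        Real.exp (-(mahal x μ0 (a • V0))) *
          ((x i - μ0 i) * (x j - μ0 j) - (mahal x μ0 (a • V0) / p) * (a • V0) i j) *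
          f x = 0) := by
  set φ : ℝ → ℝ := fun u => (Real.sqrt V0.det)⁻¹ * ψ (a * u)
  have hf' : ∀ x, f x = φ (mahal x μ0 (a • V0)) := fun x => by
    rw [hf, mahal_smul (isUnit_iff_ne_zero.mpr hV0.det_pos.ne') ha.ne']
    simp only [φ, mul_inv_cancel_left₀ ha.ne']
  have hB : MeasurableSet (centralRegion α μ0 (a • V0)) :=
    measurableSet_lt continuous_mahal.measurable measurable_const
  refine ⟨?_, fun i j => ?_⟩
  · rw [← integral_indicator hB]
    refine (integral_congr_ae (ae_of_all _ fun x => ?_)).trans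
      (integral_comp_mahal_smul_sub (fun u => hardThresholdWeight α u * φ u) μ0 (a • V0))
    simp only [Set.indicator_smul_apply_left, Set.indicator_mul_left,
      indicator_centralRegion_exp_neg, hf']
  · rw [← integral_indicator hB]
    refine (integral_congr_ae (ae_of_all _ fun x => ?_)).trans
      (integral_weight_mul_scatter_residual_mul_eq_zero (φ := φ) (hV0.smul ha)
        (measurable_hardThresholdWeight α) (measurable_const.mul (by fun_prop))
        (fun _ => norm_hardThresholdWeight_mul_le α)
        ((integrable_of_integral_eq_one hf1).congr (ae_of_all _ hf')) i j)
    simp only [Set.indicator_mul_left, indicator_centralRegion_exp_neg, hf']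

/-- Corollary 1: hard-threshold exponential weight.  For an
elliptical density `f` with parameters `(μ0, V0)`, any `α ∈ (0,1)` and every
`a > 0`, the pair `(μ, V) = (μ0, a V0)` solves the truncated estimating
equations `∫_{B(μ,V)} e^{−d(x,μ,V)} (x−μ) f(x) dx = 0` and
`∫_{B(μ,V)} e^{−d(x,μ,V)} ((x−μ)(x−μ)ᵀ − (d(x,μ,V)/p) V) f(x) dx = 0`
(the matrix equation being read entrywise). -/
theorem hard_threshold_truncated_estimating_equations
    {p : ℕ} (hp : 1 ≤ p)
    (α : ℝ) (hα : α ∈ Set.Ioo (0 : ℝ) 1)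
    (μ0 : EuclideanSpace ℝ (Fin p)) (V0 : Matrix (Fin p) (Fin p) ℝ)
    (hV0sym : V0.IsSymm) (hV0 : V0.PosDef)
    (ψ : ℝ → ℝ) (hψmeas : Measurable ψ) (hψpos : ∀ u, 0 ≤ u → 0 < ψ u)
    (f : EuclideanSpace ℝ (Fin p) → ℝ)
    (hf : ∀ x, f x = (Real.sqrt V0.det)⁻¹ * ψ (mahal x μ0 V0))
    (hf1 : ∫ x, f x = 1)
    (a : ℝ) (ha : 0 < a) :
    (∫ x in centralRegion α μ0 (a • V0),
        (Real.exp (-(mahal x μ0 (a • V0))) * f x) • (x - μ0) = 0) ∧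
    (∀ i j : Fin p,
      ∫ x in centralRegion α μ0 (a • V0),
        Real.exp (-(mahal x μ0 (a • V0))) *
          ((x i - μ0 i) * (x j - μ0 j) - (mahal x μ0 (a • V0) / p) * (a • V0) i j) *
          f x = 0) :=
  hard_threshold_truncated_estimating_equations_general α μ0 V0 hV0 ψ hψmeas f hf hf1 a ha
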